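/- Let R be a commutative ring, S = R ⊗_ℂ ℂ(x) a flat extension obtained by inverting all nonzero polynomials in variables x over a polynomial subring, and 𝔭 ⊂ R a prime ideal. Then the extension 𝔭·S is a prime ideal of S. -/
import Mathlib


open TensorProduct

set_option maxHeartbeats 1000000 in
set_option synthInstance.maxHeartbeats 1000000 in

/-- Let `R` be a finitely generated `ℂ`-algebra,
`ℂ(x)` the field of rational functions in `n` variables over `ℂ`, and
`S = R ⊗_ℂ ℂ(x)` the (flat) base extension.  Then for any prime ideal `𝔭 ⊂ R`,
the extension `𝔭·S` is a prime ideal of `S`. -/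
theorem extension_of_prime_is_prime
    (n : ℕ) (R : Type*) [CommRing R] [Algebra ℂ R] [Algebra.FiniteType ℂ R]
    (𝔭 : Ideal R) (h𝔭 : 𝔭.IsPrime) :
    (Ideal.map (algebraMap R (R ⊗[ℂ] FractionRing (MvPolynomial (Fin n) ℂ))) 𝔭).IsPrime := by
  classical
  set P := MvPolynomial (Fin n) ℂ with hPdef
  set K := FractionRing P with hKdef
  -- algebra instances
  letI : Algebra P (R ⊗[ℂ] P) := Algebra.TensorProduct.rightAlgebra
  letI : Algebra K (R ⊗[ℂ] K) := Algebra.TensorProduct.rightAlgebra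
  letI : Algebra (R ⊗[ℂ] P) (R ⊗[ℂ] K) :=
    (Algebra.TensorProduct.map (AlgHom.id ℂ R)
      (IsScalarTower.toAlgHom ℂ P K)).toRingHom.toAlgebra
  letI : Algebra P (R ⊗[ℂ] K) :=
    ((algebraMap K (R ⊗[ℂ] K)).comp (algebraMap P K)).toAlgebra
  -- scalar towers
  haveI : IsScalarTower ℂ P (R ⊗[ℂ] P) :=
    IsScalarTower.of_algebraMap_eq fun r =>
      ((Algebra.TensorProduct.includeRight (R := ℂ) (A := R) (B := P)).commutes r).symm
  haveI : IsScalarTower ℂ K (R ⊗[ℂ] K) :=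
    IsScalarTower.of_algebraMap_eq fun r =>
      ((Algebra.TensorProduct.includeRight (R := ℂ) (A := R) (B := K)).commutes r).symm
  haveI : IsScalarTower P K (R ⊗[ℂ] K) := IsScalarTower.of_algebraMap_eq' (rfl : algebraMap P (R ⊗[ℂ] K) = (algebraMap K (R ⊗[ℂ] K)).comp (algebraMap P K))
  haveI : IsScalarTower P (R ⊗[ℂ] P) (R ⊗[ℂ] K) :=
    IsScalarTower.of_algebraMap_eq fun p => by
      show Algebra.TensorProduct.includeRight (algebraMap P K p) =
        Algebra.TensorProduct.map (AlgHom.id ℂ R)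
          (IsScalarTower.toAlgHom ℂ P K) (Algebra.TensorProduct.includeRight p)
      simp
  haveI : IsScalarTower ℂ (R ⊗[ℂ] P) (R ⊗[ℂ] K) :=
    IsScalarTower.of_algebraMap_eq fun r => by
      show algebraMap ℂ (R ⊗[ℂ] K) r =
        Algebra.TensorProduct.map (AlgHom.id ℂ R)
          (IsScalarTower.toAlgHom ℂ P K) (algebraMap ℂ (R ⊗[ℂ] P) r)
      simp
  haveI : IsScalarTower R (R ⊗[ℂ] P) (R ⊗[ℂ] K) :=
    IsScalarTower.of_algebraMap_eq fun r => by
      show algebraMap R (R ⊗[ℂ] K) r =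
        Algebra.TensorProduct.map (AlgHom.id ℂ R)
          (IsScalarTower.toAlgHom ℂ P K) (algebraMap R (R ⊗[ℂ] P) r)
      simp [Algebra.TensorProduct.algebraMap_apply]
  -- pushout : R ⊗ K is the base change of R ⊗ P along P → K
  haveI hpush : Algebra.IsPushout P K (R ⊗[ℂ] P) (R ⊗[ℂ] K) :=
    (Algebra.IsPushout.comp_iff (R := ℂ) (S := P) (T := K) (R' := R)
      (S' := R ⊗[ℂ] P) (T' := R ⊗[ℂ] K)).mp inferInstance
  -- hence R ⊗ K is a localization of R ⊗ P
  haveI hloc : IsLocalization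
      (Algebra.algebraMapSubmonoid (R ⊗[ℂ] P) (nonZeroDivisors P)) (R ⊗[ℂ] K) := by
    rw [← isLocalizedModule_iff_isLocalization]
    rw [isLocalizedModule_iff_isBaseChange (nonZeroDivisors P) K]
    exact hpush.out
  -- the extended ideal in R ⊗ P
  set J : Ideal (R ⊗[ℂ] P) := Ideal.map (algebraMap R (R ⊗[ℂ] P)) 𝔭 with hJdef
  let e : R ⊗[ℂ] P ≃ₐ[R] MvPolynomial (Fin n) R :=
    MvPolynomial.algebraTensorAlgEquiv ℂ R
  have hcomp : (e : R ⊗[ℂ] P →+* MvPolynomial (Fin n) R).comp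
      (algebraMap R (R ⊗[ℂ] P)) = (MvPolynomial.C : R →+* MvPolynomial (Fin n) R) := by
    refine RingHom.ext fun r => ?_
    simpa [MvPolynomial.algebraMap_eq] using e.commutes r
  have hmapJ : Ideal.map (e : R ⊗[ℂ] P →+* MvPolynomial (Fin n) R) J =
      Ideal.map MvPolynomial.C 𝔭 := by
    rw [hJdef, Ideal.map_map, hcomp]
  have hCprime : (Ideal.map (MvPolynomial.C : R →+* MvPolynomial (Fin n) R) 𝔭).IsPrime := by
    rw [← Ideal.Quotient.isDomain_iff_prime]
    exact MulEquiv.isDomain (MvPolynomial (Fin n) (R ⧸ 𝔭))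
      (MvPolynomial.quotientEquivQuotientMvPolynomial (σ := Fin n) 𝔭).toRingEquiv.toMulEquiv.symm
  have hJeq : J = Ideal.comap (e : R ⊗[ℂ] P →+* MvPolynomial (Fin n) R)
      (Ideal.map MvPolynomial.C 𝔭) := by
    rw [← hmapJ]
    exact (Ideal.comap_map_of_bijective _ e.bijective).symm
  have hJprime : J.IsPrime := by
    haveI := hCprime
    rw [hJeq]; exact Ideal.IsPrime.comap _
  -- disjointness
  have hdisj : Disjoint
      ((Algebra.algebraMapSubmonoid (R ⊗[ℂ] P) (nonZeroDivisors P) : Submonoid (R ⊗[ℂ] P)) :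
        Set (R ⊗[ℂ] P)) (J : Set (R ⊗[ℂ] P)) := by
    rw [Set.disjoint_left]
    rintro x ⟨p, hp, rfl⟩ hxJ
    have hp0 : (p : P) ≠ 0 := nonZeroDivisors.ne_zero hp
    have hmem : e (algebraMap P (R ⊗[ℂ] P) p) ∈ Ideal.map MvPolynomial.C 𝔭 := by
      rw [← hmapJ]
      exact Ideal.mem_map_of_mem _ hxJ
    have he : e (algebraMap P (R ⊗[ℂ] P) p) = MvPolynomial.map (algebraMap ℂ R) p := by
      show MvPolynomial.algebraTensorAlgEquiv ℂ R ((1 : R) ⊗ₜ p) = _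
      rw [MvPolynomial.algebraTensorAlgEquiv_tmul, one_smul]
    rw [he, MvPolynomial.mem_map_C_iff] at hmem
    obtain ⟨m, hm⟩ : ∃ m, MvPolynomial.coeff m p ≠ 0 := by
      by_contra h
      push_neg at h
      exact hp0 (MvPolynomial.ext _ _ fun m => by simpa using h m)
    have := hmem m
    rw [MvPolynomial.coeff_map] at this
    have hunit : IsUnit (algebraMap ℂ R (MvPolynomial.coeff m p)) :=
      (IsUnit.mk0 _ hm).map (algebraMap ℂ R)
    exact h𝔭.ne_top (Ideal.eq_top_of_isUnit_mem _ this hunit)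
  -- conclude
  have hfinal := IsLocalization.isPrime_of_isPrime_disjoint
    (Algebra.algebraMapSubmonoid (R ⊗[ℂ] P) (nonZeroDivisors P)) (R ⊗[ℂ] K) J hJprime hdisj
  have hmm : Ideal.map (algebraMap (R ⊗[ℂ] P) (R ⊗[ℂ] K)) J =
      Ideal.map (algebraMap R (R ⊗[ℂ] K)) 𝔭 := by
    rw [hJdef, Ideal.map_map, ← IsScalarTower.algebraMap_eq]
  rwa [hmm] at hfinal
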